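/- arXiv:1710.08986 — 2 statements merged into one kernel-verified Lean document; each statement's English description precedes it below -/
import Mathlib

section
/- Let S be a nonempty finite type, A a finite type of actions, γ ∈ ℝ with 0 ≤ γ < 1. For each a ∈ A and s ∈ S let l^a_s, u^a_s : S → ℝ satisfy 0 ≤ l^a_s ≤ u^a_s componentwise, (∑ t, l^a_s t) ≤ 1 and 1 ≤ (∑ t, u^a_s t), set U^a_s := {p : S → ℝ | (∀ t, l^a_s t ≤ p t ∧ p t ≤ u^a_s t) ∧ ∑ t, p t = 1}, and let r^a : S → ℝ. For a pure policy π : S → A let v↓(π) : S → ℝ be the unique solution of v s = r^{π s} s + γ * sInf {x | ∃ p ∈ U^{π s}_s, x = ∑ t, p t * v t} for all s. Let π, π' : S → A be pure policies such that for every s ∈ S, r^{π' s} s + γ * sInf {x | ∃ p ∈ U^{π' s}_s, x = ∑ t, p t * v↓(π) t} ≤ v↓(π) s. Then v↓(π') s ≤ v↓(π) s for all s. -/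
lemma aux_nonempty {S : Type} [Fintype S] (l u : S → ℝ)
    (hlu : ∀ t, l t ≤ u t)
    (hsl : ∑ t, l t ≤ 1) (hsu : 1 ≤ ∑ t, u t) :
    ∃ p : S → ℝ, (∀ t, l t ≤ p t ∧ p t ≤ u t) ∧ ∑ t, p t = 1 := by
  rcases eq_or_lt_of_le hsl with h | h
  · exact ⟨l, fun t => ⟨le_rfl, hlu t⟩, h⟩
  · have hUL : 0 < ∑ t, u t - ∑ t, l t := by linarith
    set θ := (1 - ∑ t, l t) / (∑ t, u t - ∑ t, l t) with hθ
    have hθ0 : 0 ≤ θ := div_nonneg (by linarith) hUL.le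
    have hθ1 : θ ≤ 1 := by rw [hθ, div_le_one hUL]; linarith
    have hkey : θ * (∑ t, u t - ∑ t, l t) = 1 - ∑ t, l t :=
      div_mul_cancel₀ _ hUL.ne'
    refine ⟨fun t => l t + θ * (u t - l t), fun t => ⟨?_, ?_⟩, ?_⟩
    · have h1 : 0 ≤ θ * (u t - l t) := mul_nonneg hθ0 (by linarith [hlu t])
      simp only; linarith
    · have h2 : θ * (u t - l t) ≤ u t - l t :=
        mul_le_of_le_one_left (by linarith [hlu t]) hθ1
      simp only; linarith
    · have : ∑ t, (l t + θ * (u t - l t)) = ∑ t, l t + θ * (∑ t, u t - ∑ t, l t) := by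
        rw [Finset.sum_add_distrib, ← Finset.mul_sum, Finset.sum_sub_distrib]
      rw [this, hkey]; ring

lemma aux_bdd {S : Type} [Fintype S] (l u : S → ℝ) (v : S → ℝ) :
    BddBelow {x | ∃ p : S → ℝ,
      ((∀ t, l t ≤ p t ∧ p t ≤ u t) ∧ ∑ t, p t = 1) ∧ x = ∑ t, p t * v t} := by
  refine ⟨∑ t, min (l t * v t) (u t * v t), fun x hx => ?_⟩
  obtain ⟨p, ⟨hp, -⟩, rfl⟩ := hx
  refine Finset.sum_le_sum fun t _ => ?_
  rcases le_total 0 (v t) with hv | hv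
  · exact le_trans (min_le_left _ _) (mul_le_mul_of_nonneg_right (hp t).1 hv)
  · exact le_trans (min_le_right _ _) (mul_le_mul_of_nonpos_right (hp t).2 hv)

theorem stmt_10 (S A : Type) [Fintype S] [Nonempty S] [Fintype A]
    (γ : ℝ) (hγ0 : 0 ≤ γ) (hγ1 : γ < 1)
    (l u : A → S → S → ℝ)
    (hl0 : ∀ a s t, 0 ≤ l a s t) (hlu : ∀ a s t, l a s t ≤ u a s t)
    (hsl : ∀ a s, ∑ t, l a s t ≤ 1) (hsu : ∀ a s, 1 ≤ ∑ t, u a s t)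
    (r : A → S → ℝ)
    (π π' : S → A)
    (vd vd' : S → ℝ)
    (hvd : ∀ s, vd s = r (π s) s + γ * sInf {x | ∃ p : S → ℝ,
      ((∀ t, l (π s) s t ≤ p t ∧ p t ≤ u (π s) s t) ∧ ∑ t, p t = 1) ∧ x = ∑ t, p t * vd t})
    (hvd' : ∀ s, vd' s = r (π' s) s + γ * sInf {x | ∃ p : S → ℝ,
      ((∀ t, l (π' s) s t ≤ p t ∧ p t ≤ u (π' s) s t) ∧ ∑ t, p t = 1) ∧ x = ∑ t, p t * vd' t})
    (hadv : ∀ s, r (π' s) s + γ * sInf {x | ∃ p : S → ℝ,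
      ((∀ t, l (π' s) s t ≤ p t ∧ p t ≤ u (π' s) s t) ∧ ∑ t, p t = 1) ∧ x = ∑ t, p t * vd t}
        ≤ vd s) :
    ∀ s, vd' s ≤ vd s := by
  -- maximize vd' - vd over S
  obtain ⟨s₀, -, hs₀⟩ := Finset.exists_max_image Finset.univ (fun t => vd' t - vd t)
    ⟨Classical.arbitrary S, Finset.mem_univ _⟩
  set M := vd' s₀ - vd s₀ with hM
  have hmax : ∀ t, vd' t - vd t ≤ M := fun t => hs₀ t (Finset.mem_univ t)
  suffices hM0 : M ≤ 0 by
    intro s; have := hmax s; linarith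
  -- compare the two infima at s₀ over the same constraint set (action π' s₀)
  set a := π' s₀
  set T := {x | ∃ p : S → ℝ,
      ((∀ t, l a s₀ t ≤ p t ∧ p t ≤ u a s₀ t) ∧ ∑ t, p t = 1) ∧ x = ∑ t, p t * vd t}
  set T' := {x | ∃ p : S → ℝ,
      ((∀ t, l a s₀ t ≤ p t ∧ p t ≤ u a s₀ t) ∧ ∑ t, p t = 1) ∧ x = ∑ t, p t * vd' t}
  have hTne : T.Nonempty := by
    obtain ⟨p, hp, hps⟩ := aux_nonempty (l a s₀) (u a s₀) (hlu a s₀) (hsl a s₀) (hsu a s₀)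
    exact ⟨_, p, ⟨hp, hps⟩, rfl⟩
  have hbdd' : BddBelow T' := aux_bdd _ _ _
  have hinf : sInf T' ≤ sInf T + M := by
    rw [← sub_le_iff_le_add]
    refine le_csInf hTne fun b hb => ?_
    obtain ⟨p, ⟨hp, hps⟩, rfl⟩ := hb
    have hmem : (∑ t, p t * vd' t) ∈ T' := ⟨p, ⟨hp, hps⟩, rfl⟩
    have h1 : sInf T' ≤ ∑ t, p t * vd' t := csInf_le hbdd' hmem
    have h2 : ∑ t, p t * vd' t ≤ ∑ t, p t * vd t + M := by
      have : ∑ t, p t * vd' t - ∑ t, p t * vd t = ∑ t, p t * (vd' t - vd t) := by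
        rw [← Finset.sum_sub_distrib]; exact Finset.sum_congr rfl fun t _ => by ring
      have hle : ∑ t, p t * (vd' t - vd t) ≤ ∑ t, p t * M := by
        refine Finset.sum_le_sum fun t _ => ?_
        exact mul_le_mul_of_nonneg_left (hmax t) (le_trans (hl0 a s₀ t) (hp t).1)
      have hsum : ∑ t, p t * M = M := by rw [← Finset.sum_mul, hps, one_mul]
      linarith
    linarith
  have key : M ≤ γ * M := by
    have h1 : vd' s₀ = r a s₀ + γ * sInf T' := hvd' s₀
    have h2 : r a s₀ + γ * sInf T ≤ vd s₀ := hadv s₀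
    have := mul_le_mul_of_nonneg_left hinf hγ0
    rw [hM]; nlinarith
  nlinarith
end

section
/- Consider the subset-sum gadget SBMDP built from n ≥ 1, nonnegative weights m : Fin n → ℝ and discount factor γ ∈ (0,1), and let Σ := ∑ i, m i. There exists a pure policy π with v↓(π)(q 0) ≥ Σ/2 and v̄(π)(q 0) ≥ (3/2) * Σ if and only if there exists a set I ⊆ Fin n with ∑ i ∈ I, m i = Σ/2. -/
/-- States of the subset-sum gadget SBMDP: an absorbing state `t` and,
for each `i : Fin n`, the four states `q i`, `sbar i`, `sdn i` (= s↓ i),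
`sup i` (= s↑ i). -/
inductive GState (n : ℕ) where
  | q : Fin n → GState n
  | sbar : Fin n → GState n
  | sdn : Fin n → GState n
  | sup : Fin n → GState n
  | t : GState n
  deriving DecidableEq, Fintype

/-- The two actions of the gadget. -/
inductive GAct where
  | a | b
  deriving DecidableEq

instance instFintypeGAct : Fintype GAct :=
  ⟨{GAct.a, GAct.b}, fun x => by cases x <;> simp⟩

namespace GState

/-- Successor of stage `i`: `q (i+1)` if it exists, otherwise the absorbing state `t`. -/
def nxt {n : ℕ} (i : Fin n) : GState n :=
  if h : (i : ℕ) + 1 < n then GState.q ⟨(i : ℕ) + 1, h⟩ else GState.t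

/-- Dirac (indicator) probability row concentrated on `s`. -/
def ind {n : ℕ} (s : GState n) : GState n → ℝ :=
  fun t' => if t' = s then 1 else 0

/-- Lower transition-probability bounds of the gadget. -/
def lo {n : ℕ} : GState n → GAct → GState n → ℝ
  | .q i, .a => ind (.sbar i)
  | .q _, .b => fun _ => 0
  | .sbar i, _ => ind (nxt i)
  | .sdn i, _ => ind (nxt i)
  | .sup i, _ => ind (nxt i)
  | .t, _ => ind .t

/-- Upper transition-probability bounds of the gadget. -/
def hi {n : ℕ} : GState n → GAct → GState n → ℝ
  | .q i, .a => ind (.sbar i)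
  | .q i, .b => fun t' => if t' = GState.sdn i ∨ t' = GState.sup i then 1 else 0
  | .sbar i, _ => ind (nxt i)
  | .sdn i, _ => ind (nxt i)
  | .sup i, _ => ind (nxt i)
  | .t, _ => ind .t

/-- Average transition probabilities of the gadget. -/
noncomputable def avg {n : ℕ} : GState n → GAct → GState n → ℝ
  | .q i, .a => ind (.sbar i)
  | .q i, .b => fun t' => if t' = GState.sdn i ∨ t' = GState.sup i then 1 / 2 else 0
  | .sbar i, _ => ind (nxt i)
  | .sdn i, _ => ind (nxt i)
  | .sup i, _ => ind (nxt i)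
  | .t, _ => ind .t

/-- State-based (certain) rewards of the gadget, with `k i = 2 i + 1`. -/
noncomputable def rew {n : ℕ} (m : Fin n → ℝ) (γ : ℝ) : GState n → ℝ
  | .q _ => 0
  | .t => 0
  | .sdn _ => 0
  | .sbar i => m i / γ ^ (2 * (i : ℕ) + 1)
  | .sup i => 4 * m i / γ ^ (2 * (i : ℕ) + 1)

end GState

/-! Let `A` be the set of stages at which a pure policy plays `a`. The reward of stage `i` is
collected after `k(i) = 2i + 1` steps, and the factor `γ^(-k(i))` in the rewards cancels the
discount, so every stage counts undiscounted. Playing `a` at stage `i` earns `m i` in both models;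
playing `b` earns `(0 + 4 m i) / 2 = 2 m i` on average and, since `m i ≥ 0`, only `0` against the
adversary, who always chooses `s↓ i`. Hence `v↓(π)(q 0) = ∑_{i ∈ A} m i` and
`v̄(π)(q 0) = 2Σ - ∑_{i ∈ A} m i`, and the two thresholds say exactly `∑_{i ∈ A} m i = Σ/2`. -/

open Finset

section WorstCaseExpectation

variable {α : Type*} [Fintype α]

/-- The `sInf` of the worst-case Bellman equation (junk value `0` when no probability vector lies
between `l` and `u`). -/
noncomputable def worstExp (l u v : α → ℝ) : ℝ :=
  sInf {x | ∃ p : α → ℝ, ((∀ t, l t ≤ p t ∧ p t ≤ u t) ∧ ∑ t, p t = 1) ∧ x = ∑ t, p t * v t}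

theorem worstExp_self {l : α → ℝ} (hl : ∑ t, l t = 1) (v : α → ℝ) :
    worstExp l l v = ∑ t, l t * v t := by
  have hset : {x | ∃ p : α → ℝ, ((∀ t, l t ≤ p t ∧ p t ≤ l t) ∧ ∑ t, p t = 1) ∧
      x = ∑ t, p t * v t} = {∑ t, l t * v t} := by
    ext x
    constructor
    · rintro ⟨p, ⟨hp, -⟩, rfl⟩
      obtain rfl : p = l := funext fun t => le_antisymm (hp t).2 (hp t).1
      rfl
    · rintro rfl
      exact ⟨l, ⟨fun t => ⟨le_rfl, le_rfl⟩, hl⟩, rfl⟩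
  rw [worstExp, hset, csInf_singleton]

variable [DecidableEq α]

theorem worstExp_pair {x y : α} (hxy : x ≠ y) (v : α → ℝ) :
    worstExp (fun _ => 0) (fun t => if t = x ∨ t = y then 1 else 0) v = min (v x) (v y) := by
  refine IsLeast.csInf_eq ⟨?_, ?_⟩
  · have hdirac : ∀ z, (z = x ∨ z = y) → v z ∈ {r | ∃ p : α → ℝ,
        ((∀ t, (0 : ℝ) ≤ p t ∧ p t ≤ if t = x ∨ t = y then 1 else 0) ∧ ∑ t, p t = 1) ∧
          r = ∑ t, p t * v t} := by
      intro z hz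
      refine ⟨fun t => if t = z then 1 else 0, ⟨fun t => ⟨?_, ?_⟩, by simp⟩, by simp⟩
      · positivity
      · by_cases htz : t = z
        · simp [htz, hz]
        · simp only [htz, if_false]
          positivity
    rcases min_choice (v x) (v y) with h | h <;> rw [h]
    exacts [hdirac x (Or.inl rfl), hdirac y (Or.inr rfl)]
  · rintro r ⟨p, ⟨hp, hsum⟩, rfl⟩
    have hzero : ∀ t, t ≠ x ∧ t ≠ y → p t = 0 := fun t ht =>
      le_antisymm (by simpa [ht.1, ht.2] using (hp t).2) (hp t).1
    rw [Fintype.sum_eq_add x y hxy hzero] at hsum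
    rw [Fintype.sum_eq_add x y hxy fun t ht => by rw [hzero t ht, zero_mul]]
    calc min (v x) (v y) = p x * min (v x) (v y) + p y * min (v x) (v y) := by
          rw [← add_mul, hsum, one_mul]
      _ ≤ p x * v x + p y * v y := by
          gcongr
          exacts [(hp x).1, min_le_left _ _, (hp y).1, min_le_right _ _]

end WorstCaseExpectation

theorem eq_sum_range_of_backward_recursion {β : ℝ} (hβ : β ≠ 0) {W C : ℕ → ℝ} {n : ℕ}
    (hW : W n = 0) (hrec : ∀ k < n, W k = C k / β ^ k + β * W (k + 1)) :
    W 0 = ∑ k ∈ range n, C k := by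
  suffices h : ∀ k (hk : k ≤ n), β ^ k * W k = ∑ j ∈ Ico k n, C j by
    simpa using h 0 n.zero_le
  refine fun k hk => Nat.decreasingInduction (fun k hk ih => ?_) (by simp [hW]) hk
  rw [sum_eq_sum_Ico_succ_bot hk, ← ih, hrec k hk]
  field_simp
  ring

namespace GState

variable {n : ℕ}

theorem sum_ind (s : GState n) : ∑ t', ind s t' = 1 := by
  simp [ind]

theorem sum_ind_mul (s : GState n) (v : GState n → ℝ) : ∑ t', ind s t' * v t' = v s := by
  simp [ind]

theorem worstExp_ind (s : GState n) (v : GState n → ℝ) : worstExp (ind s) (ind s) v = v s := by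
  rw [worstExp_self (sum_ind s), sum_ind_mul]

theorem sdn_ne_sup (i : Fin n) : sdn i ≠ sup i := nofun

theorem sum_avg_b_mul (i : Fin n) (v : GState n → ℝ) :
    ∑ t', avg (q i) .b t' * v t' = (v (sdn i) + v (sup i)) / 2 := by
  rw [Fintype.sum_eq_add (sdn i) (sup i) (sdn_ne_sup i) fun u hu => by simp [avg, hu.1, hu.2]]
  simp only [avg, reduceCtorEq, or_false, ↓reduceIte, one_div, (sdn_ne_sup i).symm, or_true]
  ring

/-- The policy evaluation equation of the worst-case value `v↓(π)`. -/
def IsWorstCaseValue (m : Fin n → ℝ) (γ : ℝ) (π : GState n → GAct) (v : GState n → ℝ) : Prop :=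
  ∀ s, v s = rew m γ s + γ * worstExp (lo s (π s)) (hi s (π s)) v

/-- The policy evaluation equation of the average value `v̄(π)`. -/
def IsAverageValue (m : Fin n → ℝ) (γ : ℝ) (π : GState n → GAct) (v : GState n → ℝ) : Prop :=
  ∀ s, v s = rew m γ s + γ * ∑ t', avg s (π s) t' * v t'

variable {m : Fin n → ℝ} {γ : ℝ} {π : GState n → GAct} {v : GState n → ℝ}

theorem IsWorstCaseValue.apply_t (hv : IsWorstCaseValue m γ π v) (hγ : γ < 1) : v t = 0 := by
  have h := hv t
  simp only [rew, lo, hi, worstExp_ind, zero_add] at h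
  nlinarith

theorem IsAverageValue.apply_t (hv : IsAverageValue m γ π v) (hγ : γ < 1) : v t = 0 := by
  have h := hv t
  simp only [rew, avg, sum_ind_mul, zero_add] at h
  nlinarith

theorem IsWorstCaseValue.apply_q (hv : IsWorstCaseValue m γ π v) (hγ : 0 < γ) (i : Fin n)
    (hm : 0 ≤ m i) :
    v (q i) = (if π (q i) = .a then m i else 0) / γ ^ (2 * (i : ℕ)) + γ ^ 2 * v (nxt i) := by
  have hsbar := hv (sbar i)
  have hsdn := hv (sdn i)
  have hsup := hv (sup i)
  have hq := hv (q i)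
  simp only [rew, lo, hi, worstExp_ind, zero_add] at hsbar hsdn hsup
  cases hπ : π (q i) with
  | a =>
    simp only [hπ, rew, lo, hi, worstExp_ind, zero_add] at hq
    rw [hq, hsbar, if_pos rfl]
    field_simp
    ring
  | b =>
    have hle : v (sdn i) ≤ v (sup i) := by
      rw [hsdn, hsup]
      linarith [div_nonneg (mul_nonneg zero_le_four hm) (pow_pos hγ (2 * (i : ℕ) + 1)).le]
    simp only [hπ, lo, hi, worstExp_pair (sdn_ne_sup i), min_eq_left hle, rew] at hq
    rw [hq, hsdn]
    simp only [reduceCtorEq, if_false, zero_div, zero_add]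
    ring

theorem IsAverageValue.apply_q (hv : IsAverageValue m γ π v) (hγ : 0 < γ) (i : Fin n) :
    v (q i) = (if π (q i) = .a then m i else 2 * m i) / γ ^ (2 * (i : ℕ)) +
      γ ^ 2 * v (nxt i) := by
  have hsbar := hv (sbar i)
  have hsdn := hv (sdn i)
  have hsup := hv (sup i)
  have hq := hv (q i)
  simp only [rew, avg, sum_ind_mul, zero_add] at hsbar hsdn hsup
  cases hπ : π (q i) with
  | a =>
    simp only [hπ, rew, avg, sum_ind_mul, zero_add] at hq
    rw [hq, hsbar, if_pos rfl]
    field_simp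
    ring
  | b =>
    simp only [hπ, sum_avg_b_mul, rew] at hq
    rw [hq, hsdn, hsup]
    simp only [reduceCtorEq, if_false, zero_add]
    field_simp
    ring

theorem eq_sum_of_apply_q {γ : ℝ} (hγ : γ ≠ 0) (hn : 0 < n) {w : GState n → ℝ} {c : Fin n → ℝ}
    (ht : w t = 0) (hq : ∀ i, w (q i) = c i / γ ^ (2 * (i : ℕ)) + γ ^ 2 * w (nxt i)) :
    w (q ⟨0, hn⟩) = ∑ i, c i := by
  have h := eq_sum_range_of_backward_recursion (pow_ne_zero 2 hγ) (n := n)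
    (W := fun k => w (if h : k < n then q ⟨k, h⟩ else t))
    (C := fun k => if h : k < n then c ⟨k, h⟩ else 0) (by simpa using ht)
    (fun k hk => by simpa [hk, pow_mul, nxt] using hq ⟨k, hk⟩)
  simpa [hn, sum_range] using h

def stagesA (π : GState n → GAct) : Finset (Fin n) :=
  univ.filter fun i => π (q i) = .a

def policyA (I : Finset (Fin n)) : GState n → GAct
  | q i => if i ∈ I then .a else .b
  | _ => .a

theorem stagesA_policyA (I : Finset (Fin n)) : stagesA (policyA I) = I := by
  ext i
  by_cases hi : i ∈ I <;> simp [stagesA, policyA, hi]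

theorem IsWorstCaseValue.apply_q_zero (hv : IsWorstCaseValue m γ π v) (hγ0 : 0 < γ) (hγ1 : γ < 1)
    (hm : ∀ i, 0 ≤ m i) (hn : 0 < n) : v (q ⟨0, hn⟩) = ∑ i ∈ stagesA π, m i := by
  rw [stagesA, sum_filter]
  exact eq_sum_of_apply_q hγ0.ne' hn (hv.apply_t hγ1) fun i => hv.apply_q hγ0 i (hm i)

theorem IsAverageValue.apply_q_zero (hv : IsAverageValue m γ π v) (hγ0 : 0 < γ) (hγ1 : γ < 1)
    (hn : 0 < n) : v (q ⟨0, hn⟩) = 2 * ∑ i, m i - ∑ i ∈ stagesA π, m i := by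
  rw [eq_sum_of_apply_q hγ0.ne' hn (hv.apply_t hγ1) (hv.apply_q hγ0), stagesA, sum_ite,
    ← sum_filter_add_sum_filter_not univ (fun i => π (q i) = .a) m, ← mul_sum]
  ring

end GState

theorem stmt_15 (n : ℕ) (hn : 1 ≤ n) (m : Fin n → ℝ) (hm : ∀ i, 0 ≤ m i)
    (γ : ℝ) (hγ0 : 0 < γ) (hγ1 : γ < 1)
    (vd vb : (GState n → GAct) → GState n → ℝ)
    (hvd : ∀ (π : GState n → GAct) (s : GState n),
      vd π s = GState.rew m γ s + γ * sInf {x | ∃ p : GState n → ℝ,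
        ((∀ t', GState.lo s (π s) t' ≤ p t' ∧ p t' ≤ GState.hi s (π s) t') ∧
          ∑ t', p t' = 1) ∧ x = ∑ t', p t' * vd π t'})
    (hvb : ∀ (π : GState n → GAct) (s : GState n),
      vb π s = GState.rew m γ s + γ * ∑ t', GState.avg s (π s) t' * vb π t') :
    (∃ π : GState n → GAct,
      (∑ i, m i) / 2 ≤ vd π (GState.q ⟨0, hn⟩) ∧
      (3 / 2) * (∑ i, m i) ≤ vb π (GState.q ⟨0, hn⟩)) ↔
    (∃ I : Finset (Fin n), ∑ i ∈ I, m i = (∑ i, m i) / 2) := by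
  have hworst (π) := GState.IsWorstCaseValue.apply_q_zero (hvd π) hγ0 hγ1 hm hn
  have haverage (π) := GState.IsAverageValue.apply_q_zero (hvb π) hγ0 hγ1 hn
  constructor
  · rintro ⟨π, hd, hb⟩
    rw [hworst] at hd
    rw [haverage] at hb
    exact ⟨GState.stagesA π, by linarith⟩
  · rintro ⟨I, hI⟩
    refine ⟨GState.policyA I, ?_, ?_⟩
    · rw [hworst, GState.stagesA_policyA, hI]
    · rw [haverage, GState.stagesA_policyA, hI]
      linarith
end
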